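/- For every integer k ≥ 2, every integer i with 0 < i < k, and every r ∈ ℤ/nℤ, one has e_i^{(r−i)}(x_1,…,x_m) · h_{k−i}^{(r−i−1)}(x_1,…,x_m) = s_{(k−i,1^i)}^{(r−i−1)}(x_1,…,x_m) + s_{(k−i+1,1^{i−1})}^{(r−i)}(x_1,…,x_m), where (a,1^b) denotes the hook partition with first part a and b further parts equal to 1. -/

import Mathlib

noncomputable section

open Finset MvPolynomial

open Classical in
/-- Loop elementary symmetric function `e_k^{(s)}(x_1, …, x_m)`; zero for `k < 0` (and
automatically zero for `k > m`).  The variable `x_i^{(s)}` is `X (i-1, s)`. -/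
def lE (n m : ℕ) (k : ℤ) (s : ZMod n) : MvPolynomial (Fin m × ZMod n) ℤ :=
  if 0 ≤ k then
    ∑ f ∈ Finset.univ.filter (fun f : Fin k.toNat → Fin m => StrictMono f),
      ∏ j : Fin k.toNat, MvPolynomial.X (f j, s + ((j : ℕ) : ZMod n))
  else 0

open Classical in
/-- Loop complete homogeneous symmetric function `h_k^{(s)}(x_1, …, x_m)`; zero for `k < 0`. -/
def lH (n m : ℕ) (k : ℤ) (s : ZMod n) : MvPolynomial (Fin m × ZMod n) ℤ :=
  if 0 ≤ k then
    ∑ f ∈ Finset.univ.filter (fun f : Fin k.toNat → Fin m => Monotone f),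
      ∏ j : Fin k.toNat, MvPolynomial.X (f j, s - ((j : ℕ) : ZMod n))
  else 0

/-- The set of cells (0-indexed `(row, column)` pairs) of the skew shape `ρ/ν`,
where `ρ i` (resp. `ν i`) is the length of row `i` of the outer (resp. inner) shape,
and only rows `0, …, N-1` are considered. -/
def cellsOf (N : ℕ) (ρ ν : ℕ → ℕ) : Finset (ℕ × ℕ) :=
  (Finset.range N).biUnion fun i => (Finset.Ico (ν i) (ρ i)).image fun j => (i, j)

open Classical in
/-- Loop (skew) Schur function of the skew shape `ρ/ν` (rows `0, …, N-1`, 0-indexed),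
with entries in `Fin K` mapped into the variable columns via `ι : Fin K → Fin M`:
each semistandard filling `T` (rows weakly increasing, columns strictly increasing)
contributes `∏_{(i,j)} x_{ι(T(i,j))}^{(i - j + s)}`. -/
def loopSchur (n M K : ℕ) (ι : Fin K → Fin M) (N : ℕ) (ρ ν : ℕ → ℕ) (s : ZMod n) :
    MvPolynomial (Fin M × ZMod n) ℤ :=
  ∑ T ∈ ((cellsOf N ρ ν).pi fun _ => (Finset.univ : Finset (Fin K))).filter fun T =>
      (∀ (p : ℕ × ℕ) (hp : p ∈ cellsOf N ρ ν) (q : ℕ × ℕ) (hq : q ∈ cellsOf N ρ ν),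
          p.1 = q.1 → p.2 ≤ q.2 → T p hp ≤ T q hq) ∧
      (∀ (p : ℕ × ℕ) (hp : p ∈ cellsOf N ρ ν) (q : ℕ × ℕ) (hq : q ∈ cellsOf N ρ ν),
          p.2 = q.2 → p.1 < q.1 → T p hp < T q hq),
    ∏ p ∈ (cellsOf N ρ ν).attach,
      MvPolynomial.X (ι (T p.1 p.2), ((p.1.1 : ZMod n) - ((p.1.2 : ℕ) : ZMod n) + s))

/-!
Expand `e_i · h_{k-i}` as a sum over pairs `(f, g)` with `f` strictly and `g` weakly increasing,
and split according to whether `f 0 ≤ g 0`. If so, `f` is the first column and `g` the rest of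
the first row of a semistandard tableau of hook shape `(k-i+1, 1^{i-1})`; otherwise `g 0` sits
on top of the column `f`, giving a tableau of shape `(k-i, 1^i)`. Colours rise down the first
column and fall along the first row, exactly as in `e` and `h`.
-/

theorem Fin.monotone_cons {α : Type*} [Preorder α] {k : ℕ} {f : Fin k → α} {a : α} :
    Monotone (Fin.cons a f : Fin (k + 1) → α) ↔ (∀ j, a ≤ f j) ∧ Monotone f := by
  rw [monotone_iff_forall_lt, monotone_iff_forall_lt]
  exact Fin.liftFun_cons (· ≤ ·)

def risingMonomial (n m : ℕ) {k : ℕ} (s : ZMod n) (u : Fin k → Fin m) :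
    MvPolynomial (Fin m × ZMod n) ℤ :=
  ∏ t, X (u t, s + (t : ℕ))

def fallingMonomial (n m : ℕ) {k : ℕ} (s : ZMod n) (v : Fin k → Fin m) :
    MvPolynomial (Fin m × ZMod n) ℤ :=
  ∏ j, X (v j, s - (j : ℕ))

open Classical in
theorem lE_natCast (n m k : ℕ) (s : ZMod n) :
    lE n m k s =
      ∑ u ∈ univ.filter (fun u : Fin k → Fin m => StrictMono u), risingMonomial n m s u := by
  rw [lE, if_pos (Int.natCast_nonneg k), Int.toNat_natCast]
  rfl

open Classical in
theorem lH_natCast (n m k : ℕ) (s : ZMod n) :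
    lH n m k s =
      ∑ v ∈ univ.filter (fun v : Fin k → Fin m => Monotone v), fallingMonomial n m s v := by
  rw [lH, if_pos (Int.natCast_nonneg k), Int.toNat_natCast]
  rfl

theorem risingMonomial_succ (n m : ℕ) {k : ℕ} (s : ZMod n) (u : Fin (k + 1) → Fin m) :
    risingMonomial n m s u = X (u 0, s) * risingMonomial n m (s + 1) (Fin.tail u) := by
  simp only [risingMonomial, Fin.prod_univ_succ, Fin.val_zero, Nat.cast_zero, add_zero,
    Fin.val_succ, Nat.cast_succ, Fin.tail, add_assoc, add_comm (1 : ZMod n)]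

theorem fallingMonomial_succ (n m : ℕ) {k : ℕ} (s : ZMod n) (v : Fin (k + 1) → Fin m) :
    fallingMonomial n m s v = X (v 0, s) * fallingMonomial n m (s - 1) (Fin.tail v) := by
  simp only [fallingMonomial, Fin.prod_univ_succ, Fin.val_zero, Nat.cast_zero, sub_zero,
    Fin.val_succ, Nat.cast_succ, Fin.tail, sub_add_eq_sub_sub_swap]

open Classical in
theorem loopSchur_eq_sum_of_enumeration {n M K : ℕ} (ι : Fin K → Fin M) {N : ℕ}
    {ρ ν : ℕ → ℕ} (s : ZMod n) {γ : Type*} [Fintype γ] (φ : γ → ℕ × ℕ)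
    (hφ : Function.Injective φ) (hcells : ∀ p, p ∈ cellsOf N ρ ν ↔ p ∈ Set.range φ) :
    loopSchur n M K ι N ρ ν s =
      ∑ F ∈ univ.filter (fun F : γ → Fin K =>
          (∀ x y, (φ x).1 = (φ y).1 → (φ x).2 ≤ (φ y).2 → F x ≤ F y) ∧
          (∀ x y, (φ x).2 = (φ y).2 → (φ x).1 < (φ y).1 → F x < F y)),
        ∏ x, X (ι (F x), ((φ x).1 : ZMod n) - ((φ x).2 : ZMod n) + s) := by
  let e : γ ≃ cellsOf N ρ ν :=
    Equiv.ofBijective (fun x => ⟨φ x, (hcells _).2 ⟨x, rfl⟩⟩)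
      ⟨fun x y h => hφ (congrArg Subtype.val h),
        fun p => ((hcells p).1 p.2).imp fun x hx => Subtype.ext hx⟩
  have he : ∀ p (hp : p ∈ cellsOf N ρ ν), φ (e.symm ⟨p, hp⟩) = p := fun p hp =>
    congrArg Subtype.val (e.apply_symm_apply ⟨p, hp⟩)
  refine Finset.sum_nbij' (fun T x => T (φ x) (e x).2) (fun F p hp => F (e.symm ⟨p, hp⟩))
    ?_ ?_ ?_ ?_ ?_
  · simp only [mem_filter, Finset.mem_pi, mem_univ, true_and, implies_true]
    rintro T ⟨hrow, hcol⟩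
    exact ⟨fun x y => hrow _ _ _ _, fun x y => hcol _ _ _ _⟩
  · simp only [mem_filter, Finset.mem_pi, mem_univ, true_and, implies_true]
    rintro F ⟨hrow, hcol⟩
    constructor
    · intro p hp q hq
      simpa only [he] using hrow (e.symm ⟨p, hp⟩) (e.symm ⟨q, hq⟩)
    · intro p hp q hq
      simpa only [he] using hcol (e.symm ⟨p, hp⟩) (e.symm ⟨q, hq⟩)
  · intro T _
    funext p hp
    exact congrArg (fun q : cellsOf N ρ ν => T q.1 q.2) (e.apply_symm_apply ⟨p, hp⟩)
  · intro F _
    funext x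
    exact congrArg F (e.symm_apply_apply x)
  · intro T _
    rw [← univ_eq_attach, ← Fintype.prod_equiv e _ _ (fun _ => rfl)]
    rfl

def hookCell (a b : ℕ) : Fin (b + 1) ⊕ Fin a → ℕ × ℕ :=
  Sum.elim (fun t => ((t : ℕ), 0)) (fun j => (0, (j : ℕ) + 1))

theorem hookCell_injective (a b : ℕ) : Function.Injective (hookCell a b) := by
  rintro (t | j) (t' | j') h <;> simp [hookCell, Prod.ext_iff, Fin.val_inj] at h ⊢ <;> omega

theorem mem_cellsOf_hook_iff {a b : ℕ} {p : ℕ × ℕ} :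
    p ∈ cellsOf (b + 1) (fun row => if row = 0 then a + 1 else if row ≤ b then 1 else 0)
      (fun _ => 0) ↔ p ∈ Set.range (hookCell a b) := by
  obtain ⟨r, c⟩ := p
  simp only [cellsOf, mem_biUnion, mem_range, mem_image, mem_Ico, Nat.zero_le, true_and,
    Prod.mk.injEq, Set.mem_range, Sum.exists, hookCell, Sum.elim_inl, Sum.elim_inr]
  constructor
  · rintro ⟨r, hr, c, hc, rfl, rfl⟩
    by_cases hc0 : c = 0
    · exact Or.inl ⟨⟨r, hr⟩, rfl, hc0.symm⟩
    · refine Or.inr ⟨⟨c - 1, ?_⟩, ?_, by simp; omega⟩ <;> split_ifs at hc <;> omega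
  · rintro (⟨t, rfl, rfl⟩ | ⟨j, rfl, rfl⟩)
    · refine ⟨t, t.2, 0, ?_, rfl, rfl⟩
      split_ifs <;> omega
    · exact ⟨0, by omega, j + 1, by simp, rfl, rfl⟩

theorem hookCell_semistandard_iff {a b K : ℕ} (F : Fin (b + 1) ⊕ Fin a → Fin K) :
    ((∀ x y, (hookCell a b x).1 = (hookCell a b y).1 →
        (hookCell a b x).2 ≤ (hookCell a b y).2 → F x ≤ F y) ∧
      (∀ x y, (hookCell a b x).2 = (hookCell a b y).2 →
        (hookCell a b x).1 < (hookCell a b y).1 → F x < F y)) ↔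
      StrictMono (F ∘ Sum.inl) ∧ Monotone (Fin.cons (F (Sum.inl 0)) (F ∘ Sum.inr)) := by
  rw [Fin.monotone_cons]
  simp only [hookCell, Sum.forall, Sum.elim_inl, nonpos_iff_eq_zero, Sum.elim_inr, Fin.val_inj,
    forall_const, forall_eq', Std.le_refl, Fin.val_eq_zero_iff, le_add_iff_nonneg_left, zero_le,
    true_and, Nat.add_eq_zero_iff, one_ne_zero, and_false, IsEmpty.forall_iff, implies_true,
    add_le_add_iff_right, Fin.val_fin_le, not_lt_zero, and_true, Fin.val_fin_lt, Fin.val_pos_iff,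
    Function.comp_apply]
  constructor
  · rintro ⟨⟨hcorner, hv⟩, hu⟩
    exact ⟨fun _ _ => hu _ _, fun j => hcorner 0 j rfl, fun _ _ => hv _ _⟩
  · rintro ⟨hu, hcorner, hv⟩
    exact ⟨⟨by rintro _ j rfl; exact hcorner j, fun _ _ => @hv _ _⟩, fun _ _ => @hu _ _⟩

open Classical in
theorem loopSchur_hook (n m a b : ℕ) (s : ZMod n) :
    loopSchur n m m id (b + 1) (fun row => if row = 0 then a + 1 else if row ≤ b then 1 else 0)
        (fun _ => 0) s =
      ∑ uv ∈ univ.filter (fun uv : (Fin (b + 1) → Fin m) × (Fin a → Fin m) =>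
          StrictMono uv.1 ∧ Monotone (Fin.cons (uv.1 0) uv.2 : Fin (a + 1) → Fin m)),
        risingMonomial n m s uv.1 * fallingMonomial n m (s - 1) uv.2 := by
  rw [loopSchur_eq_sum_of_enumeration id s (hookCell a b) (hookCell_injective a b)
    fun _ => mem_cellsOf_hook_iff]
  refine Finset.sum_equiv (Equiv.sumArrowEquivProdArrow _ _ _) (fun F => ?_) (fun F _ => ?_)
  · simp only [mem_filter, mem_univ, true_and]
    exact hookCell_semistandard_iff F
  · simp only [Fintype.prod_sum_type, risingMonomial, fallingMonomial, hookCell, Sum.elim_inl,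
      Sum.elim_inr, id, Equiv.sumArrowEquivProdArrow_apply_fst,
      Equiv.sumArrowEquivProdArrow_apply_snd]
    congr 1 <;> refine Finset.prod_congr rfl fun x _ => ?_ <;> congr 2 <;> push_cast <;> ring

open Classical in
theorem sum_filter_lt_eq_loopSchur_hook (n m a b : ℕ) (s : ZMod n) :
    ∑ fg ∈ ((univ.filter fun f : Fin (b + 1) → Fin m => StrictMono f) ×ˢ
        (univ.filter fun g : Fin (a + 1) → Fin m => Monotone g)).filter
          (fun fg => fg.2 0 < fg.1 0),
      risingMonomial n m s fg.1 * fallingMonomial n m (s - 1) fg.2 =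
    loopSchur n m m id (b + 1 + 1)
      (fun row => if row = 0 then a + 1 else if row ≤ b + 1 then 1 else 0) (fun _ => 0)
      (s - 1) := by
  rw [loopSchur_hook]
  refine sum_nbij' (fun fg => (Fin.cons (fg.2 0) fg.1, Fin.tail fg.2))
    (fun uv => (Fin.tail uv.1, Fin.cons (uv.1 0) uv.2)) ?_ ?_ ?_ ?_ ?_
  · rintro ⟨f, g⟩
    simp only [mem_filter, mem_product, mem_univ, true_and, Fin.cons_zero, Fin.cons_self_tail]
    rw [show Fin.cons (g 0) f = Matrix.vecCons (g 0) f from rfl, strictMono_vecCons]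
    tauto
  · rintro ⟨u, v⟩
    have hu : StrictMono u ↔ u 0 < Fin.tail u 0 ∧ StrictMono (Fin.tail u) := by
      conv_lhs => rw [← Fin.cons_self_tail u]
      exact strictMono_vecCons
    simp only [mem_filter, mem_product, mem_univ, true_and, Fin.cons_zero, hu]
    tauto
  · rintro ⟨f, g⟩ -
    simp only [Fin.tail_cons, Fin.cons_zero, Fin.cons_self_tail]
  · rintro ⟨u, v⟩ -
    simp only [Fin.tail_cons, Fin.cons_zero, Fin.cons_self_tail]
  · rintro ⟨f, g⟩ -
    dsimp only
    rw [risingMonomial_succ n m (s - 1), fallingMonomial_succ n m (s - 1) g, Fin.cons_zero,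
      Fin.tail_cons, sub_add_cancel]
    ring

open Classical in
theorem sum_filter_not_lt_eq_loopSchur_hook (n m a b : ℕ) (s : ZMod n) :
    ∑ fg ∈ ((univ.filter fun f : Fin (b + 1) → Fin m => StrictMono f) ×ˢ
        (univ.filter fun g : Fin (a + 1) → Fin m => Monotone g)).filter
          (fun fg => ¬fg.2 0 < fg.1 0),
      risingMonomial n m s fg.1 * fallingMonomial n m (s - 1) fg.2 =
    loopSchur n m m id (b + 1)
      (fun row => if row = 0 then a + 1 + 1 else if row ≤ b then 1 else 0) (fun _ => 0) s := by
  rw [loopSchur_hook]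
  refine sum_congr (Finset.ext fun fg => ?_) fun _ _ => rfl
  simp only [mem_filter, mem_product, mem_univ, true_and, not_lt]
  rw [show Fin.cons (fg.1 0) fg.2 = Matrix.vecCons (fg.1 0) fg.2 from rfl, monotone_vecCons]
  tauto

theorem loop_eh_hook_general (n m : ℕ) (k i : ℕ)
    (hi0 : 0 < i) (hik : i < k) (r : ZMod n) :
    lE n m (i : ℤ) (r - (i : ZMod n)) * lH n m ((k - i : ℕ) : ℤ) (r - (i : ZMod n) - 1) =
      loopSchur n m m id (i + 1)
        (fun row => if row = 0 then k - i else if row ≤ i then 1 else 0) (fun _ => 0)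
        (r - (i : ZMod n) - 1) +
      loopSchur n m m id i
        (fun row => if row = 0 then k - i + 1 else if row ≤ i - 1 then 1 else 0) (fun _ => 0)
        (r - (i : ZMod n)) := by
  obtain ⟨b, rfl⟩ : ∃ b, i = b + 1 := ⟨i - 1, by omega⟩
  obtain ⟨a, ha⟩ : ∃ a, k - (b + 1) = a + 1 := ⟨k - (b + 1) - 1, by omega⟩
  rw [ha, Nat.add_sub_cancel, lE_natCast, lH_natCast, sum_mul_sum, ← sum_product',
    ← sum_filter_add_sum_filter_not _ (fun fg => fg.2 0 < fg.1 0),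
    sum_filter_lt_eq_loopSchur_hook, sum_filter_not_lt_eq_loopSchur_hook]

/-- `e_i^{(r−i)} h_{k−i}^{(r−i−1)}` is the sum of the two hook loop Schur
functions `s_{(k−i,1^i)}^{(r−i−1)}` and `s_{(k−i+1,1^{i−1})}^{(r−i)}`, for `0 < i < k`. -/
theorem loop_eh_hook (n m : ℕ) (hn : 1 < n) (hm : 1 ≤ m) (k i : ℕ) (hk : 2 ≤ k)
    (hi0 : 0 < i) (hik : i < k) (r : ZMod n) :
    lE n m (i : ℤ) (r - (i : ZMod n)) * lH n m ((k - i : ℕ) : ℤ) (r - (i : ZMod n) - 1) =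
      loopSchur n m m id (i + 1)
        (fun row => if row = 0 then k - i else if row ≤ i then 1 else 0) (fun _ => 0)
        (r - (i : ZMod n) - 1) +
      loopSchur n m m id i
        (fun row => if row = 0 then k - i + 1 else if row ≤ i - 1 then 1 else 0) (fun _ => 0)
        (r - (i : ZMod n)) :=
  loop_eh_hook_general n m k i hi0 hik r

end
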